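/- Every well-formed ranked tree t satisfies size(t) ≥ F(rank(t)), where F denotes the Fibonacci sequence. -/
import Mathlib


/-- Finitely-branching ordered rooted trees (rose trees). -/
inductive Rose : Type where
  | node : List Rose → Rose

mutual
  /-- The number of nodes of a rose tree. -/
  def Rose.size : Rose → ℕ
    | .node cs => 1 + Rose.sizeList cs
  /-- The total number of nodes of a list of rose trees. -/
  def Rose.sizeList : List Rose → ℕ
    | [] => 0
    | c :: cs => Rose.size c + Rose.sizeList cs
end

mutual
  /-- The rank of a rose tree: `0` if it has no subtrees, and one more than
  the rank of its last subtree otherwise. -/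
  def Rose.rank : Rose → ℕ
    | .node cs => Rose.rankList cs
  /-- One more than the rank of the last tree of the list (`0` for the empty list). -/
  def Rose.rankList : List Rose → ℕ
    | [] => 0
    | [c] => Rose.rank c + 1
    | _ :: c :: cs => Rose.rankList (c :: cs)
end

/-- A rose tree is well-formed if all of its subtrees are well-formed and,
whenever its rank `r` is at least `2`, it has at least two subtrees and some
subtree other than the last one has rank at least `r - 2`. -/
inductive Rose.WF : Rose → Prop where
  | mk : ∀ cs : List Rose,
      (∀ c ∈ cs, Rose.WF c) →
      (2 ≤ Rose.rank (.node cs) →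
        2 ≤ cs.length ∧ ∃ c ∈ cs.dropLast, Rose.rank (.node cs) - 2 ≤ c.rank) →
      Rose.WF (.node cs)

lemma Rose.sizeList_append (l₁ l₂ : List Rose) :
    Rose.sizeList (l₁ ++ l₂) = Rose.sizeList l₁ + Rose.sizeList l₂ := by
  induction l₁ with
  | nil => simp [Rose.sizeList]
  | cons a l ih => simp [Rose.sizeList, ih]; ring

lemma Rose.size_le_sizeList {c : Rose} {cs : List Rose} (h : c ∈ cs) :
    c.size ≤ Rose.sizeList cs := by
  induction cs with
  | nil => simp at h
  | cons a l ih =>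
    rcases List.mem_cons.1 h with h | h
    · subst h; simp [Rose.sizeList]
    · have := ih h
      simp [Rose.sizeList]
      omega

lemma Rose.rankList_eq : ∀ (cs : List Rose) (h : cs ≠ []),
    Rose.rankList cs = (cs.getLast h).rank + 1
  | [c], _ => by simp [Rose.rankList]
  | a :: c :: cs, _ => by
    rw [List.getLast_cons (by simp)]
    have : Rose.rankList (a :: c :: cs) = Rose.rankList (c :: cs) := by
      simp [Rose.rankList]
    rw [this]
    exact Rose.rankList_eq (c :: cs) (by simp)

/-- Every well-formed ranked tree `t` satisfies `size t ≥ F (rank t)`,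
where `F` is the Fibonacci sequence. -/
theorem stmt_4 (t : Rose) (ht : t.WF) : Nat.fib t.rank ≤ t.size := by
  induction ht with
  | mk cs hwf hr ih =>
    have hsz : Rose.size (.node cs) = 1 + Rose.sizeList cs := by simp [Rose.size]
    by_cases h2 : 2 ≤ Rose.rank (.node cs)
    · obtain ⟨hlen, c, hc, hcr⟩ := hr h2
      have hne : cs ≠ [] := by rintro rfl; simp at hlen
      have hrank : Rose.rank (.node cs) = (cs.getLast hne).rank + 1 := by
        show Rose.rankList cs = _
        exact Rose.rankList_eq cs hne
      set r := Rose.rank (.node cs) with hrdef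
      -- split the size
      have hsplit : Rose.sizeList cs
          = Rose.sizeList cs.dropLast + Rose.size (cs.getLast hne) := by
        conv_lhs => rw [← List.dropLast_append_getLast hne]
        rw [Rose.sizeList_append]
        simp [Rose.sizeList]
      have hlastmem : cs.getLast hne ∈ cs := List.getLast_mem hne
      have hlast : Nat.fib (r - 1) ≤ Rose.size (cs.getLast hne) := by
        have := ih _ hlastmem
        have : Nat.fib ((cs.getLast hne).rank) ≤ Rose.size (cs.getLast hne) := this
        have heq : (cs.getLast hne).rank = r - 1 := by omega
        rwa [heq] at this
      have hcmem : c ∈ cs := List.dropLast_subset cs hc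
      have hcsize : Nat.fib (r - 2) ≤ Rose.size c :=
        le_trans (Nat.fib_mono hcr) (ih _ hcmem)
      have hcle : Rose.size c ≤ Rose.sizeList cs.dropLast :=
        Rose.size_le_sizeList hc
      have hfib : Nat.fib r = Nat.fib (r - 1) + Nat.fib (r - 2) := by
        obtain ⟨n, hn⟩ : ∃ n, r = n + 2 := ⟨r - 2, by omega⟩
        rw [hn]
        norm_num [Nat.fib_add_two]
        omega
      omega
    · have hr1 : Rose.rank (.node cs) ≤ 1 := by omega
      have : Nat.fib (Rose.rank (.node cs)) ≤ 1 := by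
        calc Nat.fib (Rose.rank (.node cs)) ≤ Nat.fib 1 := Nat.fib_mono hr1
        _ = 1 := by simp
      omega
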